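/- arXiv:1702.04831 — 6 statements merged into one kernel-verified Lean document; each statement's English description precedes it below -/
import Mathlib

section
/- The ring B_r/J_r is an integrally closed domain (i.e., it is a domain that is integrally closed in its field of fractions). -/
/-! The map `X_ℓ ↦ s z_ℓ`, `Y_ℓ ↦ t z_ℓ` from `B_r` to `k[z, s, t]` has kernel `J_r`: a binomial
`x^d - x^{d'}` with equal image is carried to zero modulo `J_r` by exchanges
`X_i Y_j ↝ X_j Y_i`. Its image is the weight-zero part for the grading `deg z = -1`,
`deg s = deg t = 1`. In a graded domain the weight-zero part is closed under exact division,
and a subring of an integrally closed domain with this property is integrally closed: an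
element of its fraction field integral over it lies in the big ring, where it is a quotient of
two elements of the subring. -/

open MvPolynomial

/-- The ideal `J_r ⊆ B_r = k[X_0,…,X_{r-1},Y_0,…,Y_{r-1}]` generated by the elements
`X_ℓ·Y_{ℓ'} − X_{ℓ'}·Y_ℓ` for `0 ≤ ℓ < ℓ' < r`; `Sum.inl ℓ` is `X_ℓ` and `Sum.inr ℓ` is `Y_ℓ`. -/
noncomputable def Jideal (k : Type*) [CommRing k] (r : ℕ) :
    Ideal (MvPolynomial (Fin r ⊕ Fin r) k) :=
  Ideal.span { f | ∃ ℓ ℓ' : Fin r, ℓ < ℓ' ∧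
    f = X (Sum.inl ℓ) * X (Sum.inr ℓ') - X (Sum.inl ℓ') * X (Sum.inr ℓ) }

theorem GradedRing.mem_zero_of_mul_mem_zero {ι A σ : Type*} [DecidableEq ι] [AddMonoid ι]
    [Semiring A] [NoZeroDivisors A] [SetLike σ A] [AddSubmonoidClass σ A] {𝒜 : ι → σ}
    [GradedRing 𝒜] {a b : A} (hb : b ∈ 𝒜 0) (hb0 : b ≠ 0) (hab : a * b ∈ 𝒜 0) : a ∈ 𝒜 0 := by
  have hcomp (i : ι) (hi : i ≠ 0) : (DirectSum.decompose 𝒜 a i : A) = 0 := by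
    refine (mul_eq_zero.mp ?_).resolve_right hb0
    rw [← DirectSum.coe_decompose_mul_of_right_mem_zero 𝒜 hb,
      DirectSum.decompose_of_mem_ne 𝒜 hab hi.symm]
  have hdecomp : DirectSum.decompose 𝒜 a = DirectSum.of _ 0 (DirectSum.decompose 𝒜 a 0) := by
    ext i
    by_cases hi : i = 0
    · subst hi; simp
    · simp [hcomp i hi, DirectSum.of_apply, Ne.symm hi]
  rw [← (DirectSum.decompose 𝒜).symm_apply_apply a, hdecomp, DirectSum.decompose_symm_of]
  exact SetLike.coe_mem _

theorem IsIntegrallyClosed.of_injective_of_div_mem_range {A S : Type*} [CommRing A] [CommRing S]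
    [IsDomain S] [IsIntegrallyClosed S] (f : A →+* S) (hf : Function.Injective f)
    (hdiv : ∀ (a b : A) (t : S), b ≠ 0 → t * f b = f a → t ∈ f.range) :
    IsIntegrallyClosed A := by
  have : IsDomain A := hf.isDomain f
  let L := FractionRing S
  have hfL : Function.Injective ((algebraMap S L).comp f) :=
    (IsFractionRing.injective S L).comp hf
  let j : FractionRing A →+* L := IsFractionRing.lift hfL
  have hj (a : A) : j (algebraMap A _ a) = algebraMap S L (f a) :=
    IsFractionRing.lift_algebraMap hfL a
  refine (isIntegrallyClosed_iff (FractionRing A)).mpr fun {x} hx => ?_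
  obtain ⟨t, ht⟩ := IsIntegrallyClosed.isIntegral_iff.mp <|
    hx.map_of_comp_eq f j (RingHom.ext fun a => (hj a).symm)
  obtain ⟨⟨a, b⟩, hab⟩ := IsLocalization.surj (nonZeroDivisors A) x
  have htb : t * f b = f a := IsFractionRing.injective S L <| by
    rw [map_mul, ht, ← hj, ← hj, ← map_mul, hab]
  obtain ⟨c, rfl⟩ := hdiv a b t (nonZeroDivisors.coe_ne_zero b) htb
  exact ⟨c, j.injective (by rw [hj, ht])⟩

open AddMonoidAlgebra in
theorem MvPolynomial.mem_span_monomial_sub_of_mapDomain_eq_zero {R σ τ : Type*} [CommRing R]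
    {ψ : (σ →₀ ℕ) → (τ →₀ ℕ)} {p : MvPolynomial σ R} (hp : mapDomain ψ p = 0) :
    p ∈ Submodule.span R {q | ∃ d d', ψ d = ψ d' ∧ q = monomial d 1 - monomial d' 1} := by
  classical
  -- `p` minus its image pushed back along a section of `ψ` is a combination of binomials
  set S := {q : MvPolynomial σ R | ∃ d d', ψ d = ψ d' ∧ q = monomial d 1 - monomial d' 1}
  suffices h : ∀ p : MvPolynomial σ R,
      p - mapDomain (Function.invFun ψ) (mapDomain ψ p) ∈ Submodule.span R S by
    simpa [hp] using h p
  intro p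
  induction p using MvPolynomial.induction_on' with
  | monomial d c =>
    rw [← single_eq_monomial, mapDomain_single, mapDomain_single, single_eq_monomial,
      single_eq_monomial]
    have hψ : ψ d = ψ (Function.invFun ψ (ψ d)) := (Function.invFun_eq ⟨d, rfl⟩).symm
    convert Submodule.smul_mem _ c (Submodule.subset_span (s := S) ⟨_, _, hψ, rfl⟩) using 1
    simp [smul_sub, smul_monomial]
  | add p q hp hq =>
    rw [mapDomain_add, mapDomain_add]
    convert add_mem hp hq using 1
    abel

namespace Finsupp

variable {α β M : Type*}

theorem exists_sumElim_eq [Zero M] (f : α ⊕ β →₀ M) : ∃ a b, sumElim a b = f :=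
  ⟨_, _, sumFinsuppEquivProdFinsupp.left_inv f⟩

theorem sumElim_inj [Zero M] {a a' : α →₀ M} {b b' : β →₀ M} :
    sumElim a b = sumElim a' b' ↔ a = a' ∧ b = b' :=
  (sumFinsuppEquivProdFinsupp.symm.injective.eq_iff (a := (a, b)) (b := (a', b'))).trans
    Prod.ext_iff

theorem exists_eq_add_single_one {f : α →₀ ℕ} {i : α} (hi : f i ≠ 0) :
    ∃ g, f = g + single i 1 :=
  ⟨_, (sub_add_single_one_cancel hi).symm⟩

end Finsupp

section SumElim

variable {R σ τ : Type*} [CommSemiring R]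

theorem MvPolynomial.monomial_sumElim_add_single_left (a : σ →₀ ℕ) (b : τ →₀ ℕ) (i : σ)
    (c : R) :
    monomial (Finsupp.sumElim (a + Finsupp.single i 1) b) c =
      monomial (Finsupp.sumElim a b) c * X (Sum.inl i) := by
  rw [← pow_one (X _), ← monomial_add_single, ← Finsupp.sumElim_single_zero,
    ← Finsupp.sumElim_add, add_zero]

theorem MvPolynomial.monomial_sumElim_add_single_right (a : σ →₀ ℕ) (b : τ →₀ ℕ) (i : τ)
    (c : R) :
    monomial (Finsupp.sumElim a (b + Finsupp.single i 1)) c =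
      monomial (Finsupp.sumElim a b) c * X (Sum.inr i) := by
  rw [← pow_one (X _), ← monomial_add_single, ← Finsupp.sumElim_zero_single,
    ← Finsupp.sumElim_add, add_zero]

end SumElim

open Finsupp in
/-- The effect on exponents of `X_ℓ ↦ s z_ℓ`, `Y_ℓ ↦ t z_ℓ`, where `z_ℓ = X (inl ℓ)`,
`s = X (inr true)` and `t = X (inr false)`. -/
noncomputable def segreExponent (r : ℕ) : ((Fin r ⊕ Fin r) →₀ ℕ) →+ ((Fin r ⊕ Bool) →₀ ℕ) :=
  mapDomain.addMonoidHom (Sum.inl ∘ Sum.elim id id) +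
    mapDomain.addMonoidHom (Sum.inr ∘ Sum.isLeft)

noncomputable def segreMap (k : Type*) [CommRing k] (r : ℕ) :
    MvPolynomial (Fin r ⊕ Fin r) k →ₐ[k] MvPolynomial (Fin r ⊕ Bool) k :=
  AddMonoidAlgebra.mapDomainAlgHom k k (segreExponent r)

def segreWeight (r : ℕ) : Fin r ⊕ Bool → ℤ := Sum.elim (fun _ => -1) (fun _ => 1)

section Segre

open Finsupp (sumElim single degree weight)

variable {k : Type*} [CommRing k] {r : ℕ}

theorem segreExponent_sumElim (a b : Fin r →₀ ℕ) :
    segreExponent r (sumElim a b) =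
      sumElim (a + b) (single true a.degree + single false b.degree) := by
  classical
  ext (i | β) <;>
    simp [segreExponent, Finsupp.mapDomain, Finsupp.sum_fintype, Fintype.sum_sum_type,
      Finsupp.single_apply, Finsupp.degree_eq_sum]

theorem segreExponent_eq_iff {a b a' b' : Fin r →₀ ℕ} :
    segreExponent r (sumElim a b) = segreExponent r (sumElim a' b') ↔
      a + b = a' + b' ∧ a.degree = a'.degree := by
  simp only [segreExponent_sumElim, Finsupp.sumElim_inj, and_congr_right_iff]
  intro hab
  refine ⟨fun h => by simpa using congr($h true), fun h => ?_⟩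
  have hb : b.degree = b'.degree := by
    have := congr(degree $hab)
    simp only [map_add, h] at this
    omega
  rw [h, hb]

theorem weight_segreWeight_sumElim (c : Fin r →₀ ℕ) (m : Bool →₀ ℕ) :
    weight (segreWeight r) (sumElim c m) = (m.degree : ℤ) - c.degree := by
  rw [Finsupp.weight_apply, Finsupp.sum_fintype _ _ (by simp), Fintype.sum_sum_type]
  simp only [Finsupp.coe_sumElim, segreWeight, Sum.elim_inl, Sum.elim_inr, Fintype.sum_bool,
    Finsupp.degree_eq_sum, smul_neg, nsmul_one, Finset.sum_neg_distrib, Nat.cast_sum,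
    Nat.cast_add]
  ring

theorem range_segreExponent :
    Set.range (segreExponent r) = {e | weight (segreWeight r) e = 0} := by
  ext e
  obtain ⟨c, m, rfl⟩ := Finsupp.exists_sumElim_eq e
  simp only [Set.mem_range, Set.mem_ofPred_eq, weight_segreWeight_sumElim, sub_eq_zero,
    Nat.cast_inj]
  have hm : m.degree = m true + m false := by simp [Finsupp.degree_eq_sum]
  constructor
  · rintro ⟨d, hd⟩
    obtain ⟨a, b, rfl⟩ := Finsupp.exists_sumElim_eq d
    rw [segreExponent_sumElim, Finsupp.sumElim_inj] at hd
    obtain ⟨rfl, rfl⟩ := hd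
    simp
  · intro hmc
    obtain ⟨a, hac, ha⟩ := Finsupp.exists_le_degree_eq c (m true) (by omega)
    refine ⟨sumElim a (c - a), ?_⟩
    have hca : (c - a).degree = m false := by
      have := congr(degree $(add_tsub_cancel_of_le hac))
      rw [map_add] at this
      omega
    rw [segreExponent_sumElim, add_tsub_cancel_of_le hac, ha, hca]
    congr 1
    ext (_ | _) <;> simp

theorem segreMap_monomial (d : (Fin r ⊕ Fin r) →₀ ℕ) (c : k) :
    segreMap k r (monomial d c) = monomial (segreExponent r d) c := by
  rw [segreMap, AddMonoidAlgebra.mapDomainAlgHom_apply, ← single_eq_monomial,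
    AddMonoidAlgebra.mapDomain_single, single_eq_monomial]

theorem segreMap_X (v : Fin r ⊕ Fin r) :
    segreMap k r (X v) = X (Sum.inl (Sum.elim id id v)) * X (Sum.inr v.isLeft) := by
  rw [X, segreMap_monomial, X, X, monomial_mul, one_mul]
  simp [segreExponent]

theorem mem_range_segreMap_iff (q : MvPolynomial (Fin r ⊕ Bool) k) :
    q ∈ (segreMap k r).range ↔ q ∈ weightedHomogeneousSubmodule k (segreWeight r) 0 := by
  constructor
  · rw [AlgHom.mem_range]
    rintro ⟨p, rfl⟩
    induction p using MvPolynomial.induction_on' with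
    | monomial d c =>
      rw [segreMap_monomial]
      refine isWeightedHomogeneous_monomial _ _ _ ?_
      exact range_segreExponent.subset ⟨d, rfl⟩
    | add p q hp hq => rw [map_add]; exact add_mem hp hq
  · intro hq
    rw [q.as_sum]
    refine Subalgebra.sum_mem _ fun e he => ?_
    obtain ⟨d, rfl⟩ : e ∈ Set.range (segreExponent r) := by
      rw [range_segreExponent]
      exact hq (mem_support_iff.mp he)
    exact ⟨monomial d _, segreMap_monomial d _⟩

attribute [local instance] MvPolynomial.weightedGradedAlgebra in
theorem mem_range_segreMap_of_mul_mem [IsDomain k] {t b : MvPolynomial (Fin r ⊕ Bool) k}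
    (hb : b ∈ (segreMap k r).range) (hb0 : b ≠ 0) (htb : t * b ∈ (segreMap k r).range) :
    t ∈ (segreMap k r).range := by
  rw [mem_range_segreMap_iff] at *
  exact GradedRing.mem_zero_of_mul_mem_zero hb hb0 htb

theorem X_mul_X_sub_mem_Jideal (i j : Fin r) :
    X (Sum.inl i) * X (Sum.inr j) - X (Sum.inl j) * X (Sum.inr i) ∈ Jideal k r := by
  rcases lt_trichotomy i j with h | rfl | h
  · exact Ideal.subset_span ⟨i, j, h, rfl⟩
  · simp
  · rw [← neg_sub]
    exact neg_mem (Ideal.subset_span ⟨j, i, h, rfl⟩)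

theorem Jideal_le_ker_segreMap : Jideal k r ≤ RingHom.ker (segreMap k r) := by
  refine Ideal.span_le.mpr ?_
  rintro _ ⟨l, l', -, rfl⟩
  simp only [SetLike.mem_coe, RingHom.mem_ker, map_sub, map_mul, segreMap_X, Sum.elim_inl,
    Sum.elim_inr, id_eq, Sum.isLeft_inl, Sum.isLeft_inr]
  ring

theorem mk_monomial_sumElim_swap (a b : Fin r →₀ ℕ) (i j : Fin r) :
    Ideal.Quotient.mk (Jideal k r) (monomial (sumElim (a + single i 1) (b + single j 1)) 1) =
      Ideal.Quotient.mk (Jideal k r) (monomial (sumElim (a + single j 1) (b + single i 1)) 1) := by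
  rw [Ideal.Quotient.eq, monomial_sumElim_add_single_left, monomial_sumElim_add_single_right,
    monomial_sumElim_add_single_left, monomial_sumElim_add_single_right]
  convert Ideal.mul_mem_left _ (monomial (sumElim a b) 1) (X_mul_X_sub_mem_Jideal (k := k) i j)
    using 1
  ring

theorem exists_mk_monomial_sumElim_eq_add_single {a b : Fin r →₀ ℕ} (ha : a ≠ 0) {i : Fin r}
    (hi : (a + b) i ≠ 0) :
    ∃ a₀ b₀, a₀ + single i 1 + b₀ = a + b ∧ (a₀ + single i 1).degree = a.degree ∧
      Ideal.Quotient.mk (Jideal k r) (monomial (sumElim (a₀ + single i 1) b₀) 1) =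
        Ideal.Quotient.mk (Jideal k r) (monomial (sumElim a b) 1) := by
  by_cases hai : a i = 0
  -- trade a factor `X_j Y_i` of `x^(a, b)` for `X_i Y_j`
  · obtain ⟨b₀, rfl⟩ := Finsupp.exists_eq_add_single_one (by simpa [hai] using hi : b i ≠ 0)
    obtain ⟨j, hj⟩ := Finsupp.ne_iff.mp ha
    obtain ⟨a₀, rfl⟩ := Finsupp.exists_eq_add_single_one hj
    refine ⟨a₀, b₀ + single j 1, by abel, by simp, mk_monomial_sumElim_swap a₀ b₀ i j⟩
  · obtain ⟨a₀, rfl⟩ := Finsupp.exists_eq_add_single_one hai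
    exact ⟨a₀, b, rfl, rfl, rfl⟩

theorem mk_monomial_sumElim_eq {a b a' b' : Fin r →₀ ℕ} (hab : a + b = a' + b')
    (ha : a.degree = a'.degree) :
    Ideal.Quotient.mk (Jideal k r) (monomial (sumElim a b) 1) =
      Ideal.Quotient.mk (Jideal k r) (monomial (sumElim a' b') 1) := by
  induction hn : a.degree generalizing a b a' b' with
  | zero =>
    obtain rfl : a = 0 := (Finsupp.degree_eq_zero_iff a).mp hn
    obtain rfl : a' = 0 := (Finsupp.degree_eq_zero_iff a').mp (ha ▸ hn)
    rw [zero_add, zero_add] at hab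
    rw [hab]
  | succ n ih =>
    obtain ⟨i, hi⟩ := Finsupp.ne_iff.mp (fun h : a = 0 => by simp [h] at hn)
    obtain ⟨a₀, rfl⟩ := Finsupp.exists_eq_add_single_one hi
    have ha' : a' ≠ 0 := fun h => by simp [h] at ha
    obtain ⟨a₀', b₀', hab', ha₀', hmk⟩ :=
      exists_mk_monomial_sumElim_eq_add_single (k := k) ha' (i := i) (by rw [← hab]; simp)
    have hab₀ : a₀ + b = a₀' + b₀' := by
      rw [← hab', add_right_comm, add_right_comm a₀'] at hab
      exact add_right_cancel hab
    have ha₀ : a₀.degree = a₀'.degree := by simpa [← ha₀'] using ha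
    rw [← hmk, monomial_sumElim_add_single_left, monomial_sumElim_add_single_left, map_mul,
      map_mul, ih hab₀ ha₀ (by simpa using hn)]

theorem ker_segreMap : RingHom.ker (segreMap k r) = Jideal k r := by
  refine le_antisymm (fun p hp => ?_) Jideal_le_ker_segreMap
  refine Submodule.span_le (p := (Jideal k r).restrictScalars k) |>.mpr ?_
    (mem_span_monomial_sub_of_mapDomain_eq_zero (ψ := segreExponent r) hp)
  rintro _ ⟨d, d', h, rfl⟩
  obtain ⟨a, b, rfl⟩ := Finsupp.exists_sumElim_eq d
  obtain ⟨a', b', rfl⟩ := Finsupp.exists_sumElim_eq d'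
  rw [segreExponent_eq_iff] at h
  exact Ideal.Quotient.eq.mp (mk_monomial_sumElim_eq h.1 h.2)

end Segre

theorem stmt_2_general (k : Type*) [Field k] (r : ℕ) :
    IsDomain (MvPolynomial (Fin r ⊕ Fin r) k ⧸ Jideal k r) ∧
    IsIntegrallyClosed (MvPolynomial (Fin r ⊕ Fin r) k ⧸ Jideal k r) := by
  let g := Ideal.Quotient.lift (Jideal k r) (segreMap k r).toRingHom
    (fun _ hp => Jideal_le_ker_segreMap hp)
  have hg : Function.Injective g :=
    RingHom.lift_injective_of_ker_le_ideal _ _ ker_segreMap.le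
  have mem_range (q) : g q ∈ (segreMap k r).range := by
    obtain ⟨p, rfl⟩ := Ideal.Quotient.mk_surjective q
    exact ⟨p, rfl⟩
  refine ⟨hg.isDomain g, IsIntegrallyClosed.of_injective_of_div_mem_range g hg ?_⟩
  intro a b t hb htb
  obtain ⟨p, hp⟩ := mem_range_segreMap_of_mul_mem (mem_range b) (by simpa using hg.ne hb)
    (htb ▸ mem_range a)
  exact ⟨Ideal.Quotient.mk _ p, hp⟩

/-- The ring `B_r/J_r` is an integrally closed integral domain. -/
theorem stmt_2 (k : Type*) [Field k] [IsAlgClosed k] (p : ℕ) (hp : p.Prime)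
    (hp2 : 2 < p) [CharP k p] (r : ℕ) (hr : 1 ≤ r) :
    IsDomain (MvPolynomial (Fin r ⊕ Fin r) k ⧸ Jideal k r) ∧
    IsIntegrallyClosed (MvPolynomial (Fin r ⊕ Fin r) k ⧸ Jideal k r) :=
  stmt_2_general k r
end

section
/- Fix any index ℓ₁ with 0 ≤ ℓ₁ < r. The localization of B_r/J_r away from the image of Y_{ℓ₁} is isomorphic as a k-algebra to the localization of the polynomial ring k[U_0,…,U_r] in r+1 variables away from the variable U_0. (Explicitly, after inverting Y_{ℓ₁}, the ring B_r/J_r becomes the polynomial ring on Y_0,…,Y_{r−1} and X_{ℓ₁} with Y_{ℓ₁} inverted, since X_ℓ = X_{ℓ₁}·Y_{ℓ₁}^{−1}·Y_ℓ for every ℓ.) -/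
/-!
Once `Y_{ℓ₁}` is inverted, the relations `X_ℓ Y_{ℓ₁} = X_{ℓ₁} Y_ℓ` express every `X_ℓ` as
`X_{ℓ₁} Y_ℓ / Y_{ℓ₁}`, so the localization is the polynomial ring in `X_{ℓ₁}, Y_0, …, Y_{r-1}`
with `Y_{ℓ₁}` inverted: the two evident maps between these rings are inverse to each other on
generators. Relabelling the variables so that `Y_{ℓ₁}` becomes `U_0` gives the statement.
-/

open MvPolynomial

namespace IsLocalization.Away

variable {R A S P : Type*} [CommRing R] [CommRing A] [CommRing S] [CommRing P] [Algebra A S]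
  [Algebra R A] [Algebra R S] [Algebra R P] [IsScalarTower R A S] {x : A}
  [IsLocalization.Away x S] {f : A →ₐ[R] P} (hf : IsUnit (f x))

@[simp]
theorem liftAlgHom_algebraMap (a : A) : liftAlgHom (S := S) x hf (algebraMap A S a) = f a :=
  lift_eq x hf a

theorem mul_liftAlgHom_invSelf : f x * liftAlgHom x hf (invSelf (S := S) x) = 1 := by
  have h := congrArg (liftAlgHom x hf) (mul_invSelf (S := S) x)
  rwa [map_mul, map_one, liftAlgHom_algebraMap] at h

end IsLocalization.Away

section

variable {R A B : Type*} [CommRing R] [CommRing A] [CommRing B] [Algebra R A] [Algebra R B]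
  {a : A} {b : B} {f : A →ₐ[R] Localization.Away b} {g : B →ₐ[R] Localization.Away a}

noncomputable def Localization.awayAlgEquivOfLifts (hf : IsUnit (f a)) (hg : IsUnit (g b))
    (hgf : (IsLocalization.Away.liftAlgHom b hg).comp f = IsScalarTower.toAlgHom R A _)
    (hfg : (IsLocalization.Away.liftAlgHom a hf).comp g = IsScalarTower.toAlgHom R B _) :
    Localization.Away a ≃ₐ[R] Localization.Away b :=
  AlgEquiv.ofAlgHom (IsLocalization.Away.liftAlgHom a hf) (IsLocalization.Away.liftAlgHom b hg)
    (by ext x; simpa [Algebra.algHom] using DFunLike.congr_fun hfg x)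
    (by ext x; simpa [Algebra.algHom] using DFunLike.congr_fun hgf x)

end

noncomputable def MvPolynomial.awayRenameEquiv {R σ τ : Type*} [CommRing R] (e : σ ≃ τ)
    {i : σ} {j : τ} (h : e i = j) :
    Localization.Away (X i : MvPolynomial σ R) ≃ₐ[R] Localization.Away (X j : MvPolynomial τ R) :=
  IsLocalization.algEquivOfAlgEquiv (M := .powers (X i)) (T := .powers (X j)) _ _
    (renameEquiv R e) (by rw [Submonoid.map_powers]; simp [h])

namespace Jideal

variable {k : Type*} [CommRing k] {r : ℕ}

theorem X_mul_Y_sub_mem (ℓ ℓ' : Fin r) :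
    X (Sum.inl ℓ) * X (Sum.inr ℓ') - X (Sum.inl ℓ') * X (Sum.inr ℓ) ∈ Jideal k r := by
  rcases lt_trichotomy ℓ ℓ' with h | rfl | h
  · exact Ideal.subset_span ⟨ℓ, ℓ', h, rfl⟩
  · simp
  · rw [← neg_sub]
    exact neg_mem (Ideal.subset_span ⟨ℓ', ℓ, h, rfl⟩)

theorem mk_X_mul_Y_comm (ℓ ℓ' : Fin r) :
    Ideal.Quotient.mk (Jideal k r) (X (Sum.inl ℓ) * X (Sum.inr ℓ')) =
      Ideal.Quotient.mk (Jideal k r) (X (Sum.inl ℓ') * X (Sum.inr ℓ)) :=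
  Ideal.Quotient.eq.mpr (X_mul_Y_sub_mem ℓ ℓ')

variable (k) (ℓ₁ : Fin r)

-- `X none` plays the role of `X_{ℓ₁}` and `X (some ℓ)` that of `Y_ℓ`.
local notation "P" => MvPolynomial (Option (Fin r)) k
local notation "Pᵤ" => Localization.Away (X (some ℓ₁) : P)
local notation "A" => MvPolynomial (Fin r ⊕ Fin r) k ⧸ Jideal k r
local notation "Aᵧ" => Localization.Away (Ideal.Quotient.mk (Jideal k r) (X (Sum.inr ℓ₁)))

noncomputable def toAwayPoly : MvPolynomial (Fin r ⊕ Fin r) k →ₐ[k] Pᵤ :=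
  aeval (S₁ := Pᵤ) <| Sum.elim
    (fun ℓ ↦ algebraMap P Pᵤ (X none * X (some ℓ)) *
      IsLocalization.Away.invSelf (S := Pᵤ) (X (some ℓ₁) : P))
    (fun ℓ ↦ algebraMap P Pᵤ (X (some ℓ)))

@[simp]
theorem toAwayPoly_X_inl (ℓ : Fin r) :
    toAwayPoly k ℓ₁ (X (Sum.inl ℓ)) = algebraMap P Pᵤ (X none * X (some ℓ)) *
      IsLocalization.Away.invSelf (S := Pᵤ) (X (some ℓ₁) : P) :=
  aeval_X _ _

@[simp]
theorem toAwayPoly_X_inr (ℓ : Fin r) :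
    toAwayPoly k ℓ₁ (X (Sum.inr ℓ)) = algebraMap P Pᵤ (X (some ℓ)) :=
  aeval_X _ _

theorem le_ker_toAwayPoly : Jideal k r ≤ RingHom.ker (toAwayPoly k ℓ₁) := by
  rw [Jideal, Ideal.span_le]
  rintro _ ⟨ℓ, ℓ', -, rfl⟩
  simp only [SetLike.mem_coe, RingHom.mem_ker, map_sub, map_mul, toAwayPoly_X_inl,
    toAwayPoly_X_inr]
  ring

noncomputable def quotToAwayPoly : A →ₐ[k] Pᵤ :=
  Ideal.Quotient.liftₐ _ (toAwayPoly k ℓ₁) (le_ker_toAwayPoly k ℓ₁)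

@[simp]
theorem quotToAwayPoly_mk (a : MvPolynomial (Fin r ⊕ Fin r) k) :
    quotToAwayPoly k ℓ₁ (Ideal.Quotient.mk _ a) = toAwayPoly k ℓ₁ a :=
  rfl

noncomputable def polyToAwayQuot : P →ₐ[k] Aᵧ :=
  aeval fun i ↦ algebraMap A Aᵧ (Ideal.Quotient.mk _ (X (i.elim (Sum.inl ℓ₁) Sum.inr)))

@[simp]
theorem polyToAwayQuot_X (i : Option (Fin r)) :
    polyToAwayQuot k ℓ₁ (X i) =
      algebraMap A Aᵧ (Ideal.Quotient.mk _ (X (i.elim (Sum.inl ℓ₁) Sum.inr))) :=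
  aeval_X _ _

theorem polyToAwayQuot_X_none_mul (ℓ : Fin r) :
    polyToAwayQuot k ℓ₁ (X none * X (some ℓ)) =
      algebraMap A Aᵧ (Ideal.Quotient.mk _ (X (Sum.inl ℓ))) *
        polyToAwayQuot k ℓ₁ (X (some ℓ₁)) := by
  rw [map_mul, polyToAwayQuot_X, polyToAwayQuot_X, polyToAwayQuot_X]
  simp only [Option.elim_none, Option.elim_some, ← map_mul, mk_X_mul_Y_comm ℓ₁ ℓ]

theorem isUnit_quotToAwayPoly :
    IsUnit (quotToAwayPoly k ℓ₁ (Ideal.Quotient.mk _ (X (Sum.inr ℓ₁)))) := by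
  rw [quotToAwayPoly_mk, toAwayPoly_X_inr]
  exact IsLocalization.Away.algebraMap_isUnit _

theorem isUnit_polyToAwayQuot : IsUnit (polyToAwayQuot k ℓ₁ (X (some ℓ₁))) := by
  rw [polyToAwayQuot_X]
  exact IsLocalization.Away.algebraMap_isUnit (S := Aᵧ) (Ideal.Quotient.mk _ (X (Sum.inr ℓ₁)))

noncomputable def awayEquivAwayPoly : Aᵧ ≃ₐ[k] Pᵤ :=
  Localization.awayAlgEquivOfLifts (isUnit_quotToAwayPoly k ℓ₁) (isUnit_polyToAwayQuot k ℓ₁)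
    (Ideal.Quotient.algHom_ext _ <| MvPolynomial.algHom_ext fun i ↦ by
      rcases i with ℓ | ℓ
      · simp only [AlgHom.comp_apply, Ideal.Quotient.mkₐ_eq_mk, quotToAwayPoly_mk,
          toAwayPoly_X_inl, map_mul (IsLocalization.Away.liftAlgHom _ _),
          IsLocalization.Away.liftAlgHom_algebraMap, polyToAwayQuot_X_none_mul,
          IsScalarTower.coe_toAlgHom']
        rw [mul_assoc, IsLocalization.Away.mul_liftAlgHom_invSelf, mul_one]
      · simp)
    (MvPolynomial.algHom_ext fun i ↦ by
      rcases i with _ | ℓ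
      · simp [mul_assoc]
      · simp)

end Jideal

theorem stmt_5_general (k : Type*) [Field k] (r : ℕ) (ℓ₁ : Fin r) :
    Nonempty
      ((Localization.Away ((Ideal.Quotient.mk (Jideal k r)) (X (Sum.inr ℓ₁)))) ≃ₐ[k]
        Localization.Away (X (0 : Fin (r + 1)) : MvPolynomial (Fin (r + 1)) k)) :=
  ⟨(Jideal.awayEquivAwayPoly k ℓ₁).trans <|
    awayRenameEquiv ((finSuccEquiv r).symm.trans (Equiv.swap ℓ₁.succ 0)) (by simp)⟩

/-- For any fixed `ℓ₁` with `0 ≤ ℓ₁ < r`, the localization of `B_r/J_r` away from the image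
of `Y_{ℓ₁}` is `k`-isomorphic to the localization of the polynomial ring `k[U_0,…,U_r]` in
`r+1` variables away from the variable `U_0`. -/
theorem stmt_5 (k : Type*) [Field k] [IsAlgClosed k] (p : ℕ) (hp : p.Prime)
    (hp2 : 2 < p) [CharP k p] (r : ℕ) (hr : 1 ≤ r) (ℓ₁ : Fin r) :
    Nonempty
      ((Localization.Away ((Ideal.Quotient.mk (Jideal k r)) (X (Sum.inr ℓ₁)))) ≃ₐ[k]
        Localization.Away (X (0 : Fin (r + 1)) : MvPolynomial (Fin (r + 1)) k)) :=
  stmt_5_general k r ℓ₁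
end

section
/- The localization of Q_r away from the image of x_0 is isomorphic as a k-algebra to the localization of the polynomial ring k[U_0,…,U_r] in r+1 variables away from the variable U_0. (Explicitly, after inverting x_0, Q_r becomes the polynomial ring on x_0,…,x_{r−1} and y_0 with x_0 inverted, since y_ℓ = y_0^{p^{ℓ}}·x_ℓ·x_0^{−p^{ℓ}} for every ℓ ≥ 1.) -/
/-!
Write `x_ℓ, y_ℓ` for the generators of `Q_r` and `U_0, …, U_r` for the variables. Once `x_0` is
inverted, the relation with `ℓ = 0` reads `y_ℓ = (y_0 / x_0)^{p^ℓ} x_ℓ`, so the localization is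
generated by `x_0⁻¹, x_0, …, x_{r-1}, y_0`; send these to `U_0⁻¹, U_0, …, U_{r-1}, U_r`.
In the other direction `x_ℓ ↦ U_ℓ`, `y_ℓ ↦ t^{p^ℓ} U_ℓ` with `t = U_r / U_0` kills every
relation, because `(t^{p^ℓ})^{p^{ℓ'-ℓ}} = t^{p^{ℓ'}}`.
-/

open MvPolynomial

/-- The ideal of relations defining `Q_r`: inside the polynomial ring
`k[x_0,…,x_{r-1},y_0,…,y_{r-1}]` (on the index type `Fin r ⊕ Fin r`, with `Sum.inl ℓ` the
variable `x_ℓ` and `Sum.inr ℓ` the variable `y_ℓ`), it is generated by the elements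
`x_ℓ^{p^{ℓ'−ℓ}}·y_{ℓ'} − y_ℓ^{p^{ℓ'−ℓ}}·x_{ℓ'}` for all `0 ≤ ℓ < ℓ' < r`. -/
noncomputable def Qrel (k : Type*) [CommRing k] (p r : ℕ) :
    Ideal (MvPolynomial (Fin r ⊕ Fin r) k) :=
  Ideal.span { f | ∃ ℓ ℓ' : Fin r, ℓ < ℓ' ∧
    f = X (Sum.inl ℓ) ^ p ^ ((ℓ' : ℕ) - (ℓ : ℕ)) * X (Sum.inr ℓ') -
        X (Sum.inr ℓ) ^ p ^ ((ℓ' : ℕ) - (ℓ : ℕ)) * X (Sum.inl ℓ') }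

noncomputable section

namespace Qrel

variable (k : Type*) [CommRing k] (p : ℕ) {r : ℕ}

local notation "Q" => MvPolynomial (Fin r ⊕ Fin r) k ⧸ Qrel k p r
local notation "x" ℓ:max => (Ideal.Quotient.mk (Qrel k p r) (X (Sum.inl ℓ)) : Q)
local notation "y" ℓ:max => (Ideal.Quotient.mk (Qrel k p r) (X (Sum.inr ℓ)) : Q)
local notation "P" => MvPolynomial (Fin (r + 1)) k

theorem le_ker_aeval {S : Type*} [CommRing S] [Algebra k S] (u : Fin r → S) (t : S) :
    Qrel k p r ≤
      RingHom.ker (aeval (R := k) (Sum.elim u fun ℓ : Fin r ↦ t ^ p ^ (ℓ : ℕ) * u ℓ)) := by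
  rw [Qrel, Ideal.span_le]
  rintro _ ⟨ℓ, ℓ', hℓ, rfl⟩
  have hexp : p ^ (ℓ : ℕ) * p ^ ((ℓ' : ℕ) - ℓ) = p ^ (ℓ' : ℕ) := by
    rw [← pow_add, Nat.add_sub_cancel' (Fin.le_def.mp hℓ.le)]
  simp only [SetLike.mem_coe, RingHom.mem_ker, map_sub, map_mul, map_pow, aeval_X,
    Sum.elim_inl, Sum.elim_inr, mul_pow, ← pow_mul, hexp]
  ring

theorem x_pow_mul_y {ℓ ℓ' : Fin r} (h : ℓ ≤ ℓ') :
    (x ℓ) ^ p ^ ((ℓ' : ℕ) - ℓ) * y ℓ' = (y ℓ) ^ p ^ ((ℓ' : ℕ) - ℓ) * x ℓ' := by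
  rcases h.lt_or_eq with h | rfl
  · rw [← map_pow, ← map_mul, ← map_pow, ← map_mul, Ideal.Quotient.eq]
    exact Ideal.subset_span ⟨ℓ, ℓ', h, rfl⟩
  · rw [Nat.sub_self, pow_zero, pow_one, pow_one, mul_comm]

variable {k p}

theorem map_y_eq_of_mul_eq_one {S : Type*} [CommRing S] (f : Q →+* S) (hr : 1 ≤ r) {w : S}
    (hw : f (x ⟨0, hr⟩) * w = 1) (ℓ : Fin r) :
    f (y ℓ) = (f (y ⟨0, hr⟩) * w) ^ p ^ (ℓ : ℕ) * f (x ℓ) := by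
  have h := congrArg f (x_pow_mul_y k p (show ⟨0, hr⟩ ≤ ℓ from Nat.zero_le _))
  simp only [map_mul, map_pow, Nat.sub_zero] at h
  calc f (y ℓ) = (f (x ⟨0, hr⟩) * w) ^ p ^ (ℓ : ℕ) * f (y ℓ) := by
        rw [hw, one_pow, one_mul]
    _ = w ^ p ^ (ℓ : ℕ) * (f (x ⟨0, hr⟩) ^ p ^ (ℓ : ℕ) * f (y ℓ)) := by ring
    _ = (f (y ⟨0, hr⟩) * w) ^ p ^ (ℓ : ℕ) * f (x ℓ) := by rw [h]; ring

variable (k p) (hr : 1 ≤ r)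

theorem castSucc_mk_zero : Fin.castSucc (⟨0, hr⟩ : Fin r) = 0 := rfl

abbrev AwayX₀ : Type _ := Localization.Away (x ⟨0, hr⟩)

variable (r) in
abbrev AwayU₀ : Type _ := Localization.Away (X 0 : MvPolynomial (Fin (r + 1)) k)

variable (r) in
def toAwayImage : Fin r ⊕ Fin r → AwayU₀ k r :=
  Sum.elim (fun ℓ ↦ algebraMap P _ (X ℓ.castSucc)) fun ℓ ↦
    (algebraMap P _ (X (Fin.last r)) * IsLocalization.Away.invSelf (X 0 : P)) ^ p ^ (ℓ : ℕ) *
      algebraMap P _ (X ℓ.castSucc)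

def toAway : AwayX₀ k p hr →ₐ[k] AwayU₀ k r :=
  IsLocalization.Away.liftAlgHom (x ⟨0, hr⟩)
    (f := Ideal.Quotient.liftₐ _ (aeval (toAwayImage k p r))
      fun _ ha ↦ RingHom.mem_ker.mp (le_ker_aeval k p _ _ ha))
    (by
      change IsUnit (aeval (toAwayImage k p r) (X (Sum.inl ⟨0, hr⟩)))
      rw [aeval_X]
      exact IsLocalization.Away.algebraMap_isUnit (X 0 : P))

def ofAway : AwayU₀ k r →ₐ[k] AwayX₀ k p hr :=
  IsLocalization.Away.liftAlgHom (X 0 : P) (S := AwayU₀ k r)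
    (f := aeval (Fin.lastCases (algebraMap Q (AwayX₀ k p hr) (y ⟨0, hr⟩))
      fun ℓ ↦ algebraMap Q (AwayX₀ k p hr) (x ℓ)))
    (by
      rw [← castSucc_mk_zero hr, aeval_X, Fin.lastCases_castSucc]
      exact IsLocalization.Away.algebraMap_isUnit (S := AwayX₀ k p hr) _)

theorem toAway_mk (a : MvPolynomial (Fin r ⊕ Fin r) k) :
    toAway k p hr (algebraMap Q _ (Ideal.Quotient.mk _ a)) = aeval (toAwayImage k p r) a := by
  rw [toAway, IsLocalization.Away.liftAlgHom_apply, IsLocalization.Away.lift_eq]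
  rfl

theorem toAway_x (ℓ : Fin r) :
    toAway k p hr (algebraMap Q _ (x ℓ)) = algebraMap P (AwayU₀ k r) (X ℓ.castSucc) := by
  rw [toAway_mk, aeval_X]
  rfl

theorem toAway_y (ℓ : Fin r) :
    toAway k p hr (algebraMap Q _ (y ℓ)) =
      (algebraMap P _ (X (Fin.last r)) * IsLocalization.Away.invSelf (X 0 : P)) ^ p ^ (ℓ : ℕ) *
        algebraMap P (AwayU₀ k r) (X ℓ.castSucc) := by
  rw [toAway_mk, aeval_X]
  rfl

theorem ofAway_X_castSucc (ℓ : Fin r) :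
    ofAway k p hr (algebraMap P _ (X ℓ.castSucc)) = algebraMap Q (AwayX₀ k p hr) (x ℓ) := by
  simp [ofAway]

theorem ofAway_X_last :
    ofAway k p hr (algebraMap P _ (X (Fin.last r))) =
      algebraMap Q (AwayX₀ k p hr) (y ⟨0, hr⟩) := by
  simp [ofAway]

theorem x₀_mul_ofAway_invSelf :
    algebraMap Q (AwayX₀ k p hr) (x ⟨0, hr⟩) *
      ofAway k p hr (IsLocalization.Away.invSelf (X 0 : P)) = 1 := by
  rw [← ofAway_X_castSucc, castSucc_mk_zero, ← map_mul, IsLocalization.Away.mul_invSelf,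
    map_one]

theorem toAway_comp_ofAway : (toAway k p hr).comp (ofAway k p hr) = AlgHom.id k _ := by
  apply IsLocalization.algHom_ext (Submonoid.powers (X 0 : P))
  refine MvPolynomial.algHom_ext fun i ↦ ?_
  show toAway k p hr (ofAway k p hr (algebraMap P _ (X i))) = algebraMap P (AwayU₀ k r) (X i)
  induction i using Fin.lastCases with
  | last =>
    rw [ofAway_X_last, toAway_y, Fin.val_mk, pow_zero, pow_one, castSucc_mk_zero, mul_assoc,
      mul_comm (IsLocalization.Away.invSelf _), IsLocalization.Away.mul_invSelf, mul_one]
  | cast ℓ => rw [ofAway_X_castSucc, toAway_x]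

theorem ofAway_comp_toAway : (ofAway k p hr).comp (toAway k p hr) = AlgHom.id k _ := by
  apply IsLocalization.algHom_ext (Submonoid.powers (x ⟨0, hr⟩))
  apply Ideal.Quotient.algHom_ext
  refine MvPolynomial.algHom_ext fun i ↦ ?_
  rcases i with ℓ | ℓ
  · show ofAway k p hr (toAway k p hr (algebraMap Q _ (x ℓ))) =
      algebraMap Q (AwayX₀ k p hr) (x ℓ)
    rw [toAway_x, ofAway_X_castSucc]
  · show ofAway k p hr (toAway k p hr (algebraMap Q _ (y ℓ))) =
      algebraMap Q (AwayX₀ k p hr) (y ℓ)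
    rw [toAway_y, map_mul, map_pow, map_mul, ofAway_X_last, ofAway_X_castSucc,
      map_y_eq_of_mul_eq_one _ hr (x₀_mul_ofAway_invSelf k p hr) ℓ]

def awayEquiv : AwayX₀ k p hr ≃ₐ[k] AwayU₀ k r :=
  AlgEquiv.ofAlgHom (toAway k p hr) (ofAway k p hr) (toAway_comp_ofAway k p hr)
    (ofAway_comp_toAway k p hr)

end Qrel

end

theorem stmt_9_general (k : Type*) [Field k] (p : ℕ) (r : ℕ) (hr : 1 ≤ r) :
    Nonempty
      ((Localization.Away
          (Ideal.Quotient.mk (Qrel k p r) (X (Sum.inl (⟨0, hr⟩ : Fin r))))) ≃ₐ[k]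
        Localization.Away (X (0 : Fin (r + 1)) : MvPolynomial (Fin (r + 1)) k)) :=
  ⟨Qrel.awayEquiv k p hr⟩

/-- The localization of `Q_r` away from the image of `x_0` is `k`-isomorphic to the
localization of the polynomial ring `k[U_0,…,U_r]` in `r+1` variables away from `U_0`. -/
theorem stmt_9 (k : Type*) [Field k] [IsAlgClosed k] (p : ℕ) (hp : p.Prime)
    (hp2 : 2 < p) [CharP k p] (r : ℕ) (hr : 1 ≤ r) :
    Nonempty
      ((Localization.Away
          (Ideal.Quotient.mk (Qrel k p r) (X (Sum.inl (⟨0, hr⟩ : Fin r))))) ≃ₐ[k]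
        Localization.Away (X (0 : Fin (r + 1)) : MvPolynomial (Fin (r + 1)) k)) :=
  stmt_9_general k p r hr
end

section
/- Assume r ≥ 2. The radical of the ideal I_r equals P_1 ∩ P_2; moreover P_1 is a prime ideal, neither P_1 ⊆ P_2 nor P_2 ⊆ P_1 holds, and consequently the radical of I_r is not a prime ideal (so the variety Y_r(U_4/Γ_3) is the non-trivial union of two irreducible closed subvarieties). -/
open MvPolynomial

/-- `C_r = k[x_0,…,x_{r-1},y_0,…,y_{r-1},z_0,…,z_{r-1}]` is realized as the multivariate
polynomial ring over `k` on the index type `Fin r ⊕ (Fin r ⊕ Fin r)`, where `Sum.inl ℓ` is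
`x_ℓ`, `Sum.inr (Sum.inl ℓ)` is `y_ℓ` and `Sum.inr (Sum.inr ℓ)` is `z_ℓ`.
`P_1 ⊆ C_r` is the ideal generated by `y_0,…,y_{r-1}`. -/
noncomputable def P1ideal (k : Type*) [CommRing k] (r : ℕ) :
    Ideal (MvPolynomial (Fin r ⊕ (Fin r ⊕ Fin r)) k) :=
  Ideal.span (Set.range fun ℓ : Fin r => X (Sum.inr (Sum.inl ℓ)))

/-- `P_2 ⊆ C_r` is the ideal generated by all 2×2 minors
`x_ℓ·y_{ℓ'} − x_{ℓ'}·y_ℓ`, `y_ℓ·z_{ℓ'} − y_{ℓ'}·z_ℓ`, `x_ℓ·z_{ℓ'} − x_{ℓ'}·z_ℓ`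
(`0 ≤ ℓ < ℓ' < r`) of the 3×r matrix whose rows are `(x_ℓ)`, `(y_ℓ)`, `(z_ℓ)`. -/
noncomputable def P2ideal (k : Type*) [CommRing k] (r : ℕ) :
    Ideal (MvPolynomial (Fin r ⊕ (Fin r ⊕ Fin r)) k) :=
  Ideal.span { f | ∃ ℓ ℓ' : Fin r, ℓ < ℓ' ∧
    (f = X (Sum.inl ℓ) * X (Sum.inr (Sum.inl ℓ')) -
         X (Sum.inl ℓ') * X (Sum.inr (Sum.inl ℓ)) ∨
     f = X (Sum.inr (Sum.inl ℓ)) * X (Sum.inr (Sum.inr ℓ')) -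
         X (Sum.inr (Sum.inl ℓ')) * X (Sum.inr (Sum.inr ℓ)) ∨
     f = X (Sum.inl ℓ) * X (Sum.inr (Sum.inr ℓ')) -
         X (Sum.inl ℓ') * X (Sum.inr (Sum.inr ℓ))) }

/-- `I_r ⊆ C_r` is the ideal generated by the elements `x_ℓ·y_{ℓ'} − x_{ℓ'}·y_ℓ` and
`y_ℓ·z_{ℓ'} − y_{ℓ'}·z_ℓ` for all `0 ≤ ℓ < ℓ' < r`. -/
noncomputable def Iideal (k : Type*) [CommRing k] (r : ℕ) :
    Ideal (MvPolynomial (Fin r ⊕ (Fin r ⊕ Fin r)) k) :=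
  Ideal.span { f | ∃ ℓ ℓ' : Fin r, ℓ < ℓ' ∧
    (f = X (Sum.inl ℓ) * X (Sum.inr (Sum.inl ℓ')) -
         X (Sum.inl ℓ') * X (Sum.inr (Sum.inl ℓ)) ∨
     f = X (Sum.inr (Sum.inl ℓ)) * X (Sum.inr (Sum.inr ℓ')) -
         X (Sum.inr (Sum.inl ℓ')) * X (Sum.inr (Sum.inr ℓ))) }

/-!
`P₂` is the kernel of the Segre map `x_{ρℓ} ↦ s_ρ t_ℓ` on the generic `3 × r` matrix. Two
monomials have the same image exactly when their exponent matrices have the same row and column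
sums, and such matrices are connected by exchanges along `2 × 2` minors; so the kernel is spanned
by the minors and `P₂` is prime. `P₁` is prime as an ideal generated by variables. Since
`I ⊆ P₁ ∩ P₂` and `P₁ P₂ ⊆ I`, the radical of `I` is `P₁ ∩ P₂`, which is not prime because
`P₁` and `P₂` are incomparable (as evaluation at suitable points shows).
-/

theorem Ideal.radical_eq_inf_of_le_of_mul_le {R : Type*} [CommRing R] {I P Q : Ideal R}
    (hP : P.IsPrime) (hQ : Q.IsPrime) (hI : I ≤ P ⊓ Q) (hPQ : P * Q ≤ I) :
    I.radical = P ⊓ Q := by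
  refine le_antisymm ?_ ?_
  · calc I.radical ≤ (P ⊓ Q).radical := Ideal.radical_mono hI
      _ = P ⊓ Q := by rw [Ideal.radical_inf, hP.radical, hQ.radical]
  · calc P ⊓ Q = (P * Q).radical := by rw [Ideal.radical_mul, hP.radical, hQ.radical]
      _ ≤ I.radical := Ideal.radical_mono hPQ

theorem Ideal.not_isPrime_inf_of_not_le {R : Type*} [CommRing R] {P Q : Ideal R}
    (hPQ : ¬P ≤ Q) (hQP : ¬Q ≤ P) : ¬(P ⊓ Q).IsPrime := fun h => by
  rcases h.inf_le.1 le_rfl with h | h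
  · exact hPQ (h.trans inf_le_right)
  · exact hQP (h.trans inf_le_left)

theorem Ideal.mem_of_antisymm_of_forall_lt {S α : Type*} [CommRing S] [LinearOrder α]
    {I : Ideal S} {g : α → α → S} (hg : ∀ a b, g b a = -g a b) (hdiag : ∀ a, g a a = 0)
    (h : ∀ a b, a < b → g a b ∈ I) (a b : α) : g a b ∈ I := by
  rcases lt_trichotomy a b with hab | rfl | hab
  · exact h a b hab
  · exact hdiag a ▸ I.zero_mem
  · rw [hg]
    exact I.neg_mem (h b a hab)

theorem Finsupp.exists_eq_add_single_one_s14 {σ : Type*} {m : σ →₀ ℕ} {s : σ} (h : m s ≠ 0) :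
    ∃ a, m = a + Finsupp.single s 1 :=
  ⟨m - Finsupp.single s 1,
    (tsub_add_cancel_of_le (Finsupp.single_le_iff.2 (Nat.one_le_iff_ne_zero.2 h))).symm⟩

namespace MvPolynomial

section SpanX

variable {σ R : Type*} [CommRing R]

theorem sub_aeval_indicator_compl_mem_span_X_image (s : Set σ) (f : MvPolynomial σ R) :
    f - aeval (sᶜ.indicator X) f ∈ Ideal.span (X '' s) := by
  induction f using MvPolynomial.induction_on with
  | C c => simp
  | add p q hp hq =>
    rw [map_add, add_sub_add_comm]
    exact add_mem hp hq
  | mul_X p i hp =>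
    have hi : X i - sᶜ.indicator X i ∈ Ideal.span (X '' s : Set (MvPolynomial σ R)) := by
      by_cases h : i ∈ s
      · simpa [h] using Ideal.subset_span (Set.mem_image_of_mem X h)
      · simp [h]
    rw [map_mul, aeval_X, show p * X i - aeval (sᶜ.indicator X) p * sᶜ.indicator X i =
      (p - aeval (sᶜ.indicator X) p) * X i + aeval (sᶜ.indicator X) p * (X i - sᶜ.indicator X i)
      by ring]
    exact add_mem (Ideal.mul_mem_right _ _ hp) (Ideal.mul_mem_left _ _ hi)

theorem span_X_image_eq_ker (s : Set σ) :
    (Ideal.span (X '' s) : Ideal (MvPolynomial σ R)) =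
      RingHom.ker (aeval (R := R) (sᶜ.indicator (X : σ → MvPolynomial σ R))) := by
  refine le_antisymm (Ideal.span_le.2 ?_) fun f hf => ?_
  · rintro _ ⟨i, hi, rfl⟩
    simp [hi]
  · have h := sub_aeval_indicator_compl_mem_span_X_image s f
    rwa [RingHom.mem_ker.1 hf, sub_zero] at h

theorem isPrime_span_X_image [IsDomain R] (s : Set σ) :
    (Ideal.span (X '' s : Set (MvPolynomial σ R))).IsPrime :=
  span_X_image_eq_ker (R := R) s ▸ RingHom.ker_isPrime _

end SpanX

section Segre

variable {ι κ R : Type*} [CommRing R]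

noncomputable def minor (i i' : ι) (j j' : κ) : MvPolynomial (ι × κ) R :=
  X (i, j) * X (i', j') - X (i, j') * X (i', j)

variable (ι κ R) in
noncomputable def minorIdeal : Ideal (MvPolynomial (ι × κ) R) :=
  Ideal.span {f | ∃ (i i' : ι) (j j' : κ), f = minor i i' j j'}

theorem minor_mem_minorIdeal (i i' : ι) (j j' : κ) : minor i i' j j' ∈ minorIdeal ι κ R :=
  Ideal.subset_span ⟨i, i', j, j', rfl⟩

theorem minor_swap_rows (i i' : ι) (j j' : κ) :
    (minor i' i j j' : MvPolynomial (ι × κ) R) = -minor i i' j j' := by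
  simp only [minor]; ring

theorem minor_swap_cols (i i' : ι) (j j' : κ) :
    (minor i i' j' j : MvPolynomial (ι × κ) R) = -minor i i' j j' := by
  simp only [minor]; ring

@[simp] theorem minor_self_rows (i : ι) (j j' : κ) :
    (minor i i j j' : MvPolynomial (ι × κ) R) = 0 := by
  rw [minor, mul_comm, sub_self]

@[simp] theorem minor_self_cols (i i' : ι) (j : κ) :
    (minor i i' j j : MvPolynomial (ι × κ) R) = 0 :=
  sub_self _

theorem minorIdeal_le [LinearOrder ι] [LinearOrder κ] {I : Ideal (MvPolynomial (ι × κ) R)}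
    (h : ∀ (i i' : ι) (j j' : κ), i < i' → j < j' → minor i i' j j' ∈ I) :
    minorIdeal ι κ R ≤ I := by
  refine Ideal.span_le.2 ?_
  rintro _ ⟨i, i', j, j', rfl⟩
  refine Ideal.mem_of_antisymm_of_forall_lt (g := fun i i' => minor i i' j j')
    (fun _ _ => minor_swap_rows ..) (fun _ => minor_self_rows ..) (fun i i' hi => ?_) i i'
  exact Ideal.mem_of_antisymm_of_forall_lt (g := fun j j' => minor i i' j j')
    (fun _ _ => minor_swap_cols ..) (fun _ => minor_self_cols ..) (h i i' · · hi) j j'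

variable (R) in
noncomputable def segre : MvPolynomial (ι × κ) R →ₐ[R] MvPolynomial (ι ⊕ κ) R :=
  aeval fun s => X (Sum.inl s.1) * X (Sum.inr s.2)

theorem minorIdeal_le_ker_segre :
    minorIdeal ι κ R ≤ RingHom.ker (segre R : MvPolynomial (ι × κ) R →ₐ[R] _) := by
  refine Ideal.span_le.2 ?_
  rintro _ ⟨i, i', j, j', rfl⟩
  simp only [SetLike.mem_coe, RingHom.mem_ker, minor, map_sub, map_mul, segre, aeval_X]
  ring

theorem monomial_exchange_sub_mem_minorIdeal (b : ι × κ →₀ ℕ) (i i' : ι) (j j' : κ) :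
    monomial (b + Finsupp.single (i, j') 1 + Finsupp.single (i', j) 1) (1 : R) -
      monomial (b + Finsupp.single (i, j) 1 + Finsupp.single (i', j') 1) 1 ∈ minorIdeal ι κ R := by
  convert neg_mem (Ideal.mul_mem_left _ (monomial b 1) (minor_mem_minorIdeal (R := R) i i' j j'))
    using 1
  simp only [monomial_add_single, minor, pow_one]
  ring

variable [Fintype ι] [Fintype κ]

noncomputable def marginals (m : ι × κ →₀ ℕ) : ι ⊕ κ →₀ ℕ :=
  Finsupp.equivFunOnFinite.symm (Sum.elim (fun i => ∑ j, m (i, j)) (fun j => ∑ i, m (i, j)))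

@[simp] theorem marginals_inl (m : ι × κ →₀ ℕ) (i : ι) :
    marginals m (Sum.inl i) = ∑ j, m (i, j) := rfl

@[simp] theorem marginals_inr (m : ι × κ →₀ ℕ) (j : κ) :
    marginals m (Sum.inr j) = ∑ i, m (i, j) := rfl

@[simp] theorem marginals_zero : marginals (0 : ι × κ →₀ ℕ) = 0 := by
  ext (i | j) <;> simp

theorem marginals_add (m m' : ι × κ →₀ ℕ) : marginals (m + m') = marginals m + marginals m' := by
  ext (i | j) <;> simp [Finset.sum_add_distrib]

theorem marginals_single (s : ι × κ) (n : ℕ) :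
    marginals (Finsupp.single s n) =
      Finsupp.single (Sum.inl s.1) n + Finsupp.single (Sum.inr s.2) n := by
  classical
  ext (i | j) <;> simp [Finsupp.single_apply, Prod.ext_iff, ite_and, eq_comm]

theorem segre_monomial (m : ι × κ →₀ ℕ) (c : R) :
    segre R (monomial m c) = monomial (marginals m) c := by
  suffices h : segre R (monomial m (1 : R)) = monomial (marginals m) 1 by
    rw [← mul_one c, ← C_mul_monomial, map_mul, h, segre, aeval_C, algebraMap_eq, C_mul_monomial]
  induction m using Finsupp.induction_linear with
  | zero => simp
  | add a b ha hb =>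
    rw [← one_mul (1 : R), ← monomial_mul, map_mul, ha, hb, monomial_mul, marginals_add]
  | single s n =>
    rw [← X_pow_eq_monomial, marginals_single, ← one_mul (1 : R), ← monomial_mul,
      ← X_pow_eq_monomial, ← X_pow_eq_monomial, map_pow, segre, aeval_X, mul_pow]

theorem le_marginals_inl (m : ι × κ →₀ ℕ) (i : ι) (j : κ) : m (i, j) ≤ marginals m (Sum.inl i) :=
  Finset.single_le_sum (f := fun j => m (i, j)) (fun _ _ => Nat.zero_le _) (Finset.mem_univ j)

theorem le_marginals_inr (m : ι × κ →₀ ℕ) (i : ι) (j : κ) : m (i, j) ≤ marginals m (Sum.inr j) :=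
  Finset.single_le_sum (f := fun i => m (i, j)) (fun _ _ => Nat.zero_le _) (Finset.mem_univ i)

theorem exists_ne_zero_of_marginals_inl_ne_zero {m : ι × κ →₀ ℕ} {i : ι}
    (h : marginals m (Sum.inl i) ≠ 0) : ∃ j, m (i, j) ≠ 0 := by
  obtain ⟨j, -, hj⟩ := Finset.exists_ne_zero_of_sum_ne_zero h
  exact ⟨j, hj⟩

theorem exists_ne_zero_of_marginals_inr_ne_zero {m : ι × κ →₀ ℕ} {j : κ}
    (h : marginals m (Sum.inr j) ≠ 0) : ∃ i, m (i, j) ≠ 0 := by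
  obtain ⟨i, -, hi⟩ := Finset.exists_ne_zero_of_sum_ne_zero h
  exact ⟨i, hi⟩

theorem eq_zero_of_marginals_eq_zero {m : ι × κ →₀ ℕ} (h : marginals m = 0) : m = 0 := by
  ext ⟨i, j⟩
  simpa [h] using le_marginals_inl m i j

theorem marginals_exchange (b : ι × κ →₀ ℕ) (i i' : ι) (j j' : κ) :
    marginals (b + Finsupp.single (i, j') 1 + Finsupp.single (i', j) 1) =
      marginals (b + Finsupp.single (i, j) 1 + Finsupp.single (i', j') 1) := by
  simp only [marginals_add, marginals_single]
  abel

theorem exists_exchange_ne_zero (m : ι × κ →₀ ℕ) {i : ι} {j : κ}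
    (hi : marginals m (Sum.inl i) ≠ 0) (hj : marginals m (Sum.inr j) ≠ 0) :
    ∃ m', m' (i, j) ≠ 0 ∧ marginals m' = marginals m ∧
      monomial m (1 : R) - monomial m' 1 ∈ minorIdeal ι κ R := by
  by_cases hij : m (i, j) ≠ 0
  · exact ⟨m, hij, rfl, by simp⟩
  obtain ⟨j', hj'⟩ := exists_ne_zero_of_marginals_inl_ne_zero hi
  obtain ⟨i', hi'⟩ := exists_ne_zero_of_marginals_inr_ne_zero hj
  obtain ⟨a, rfl⟩ := Finsupp.exists_eq_add_single_one_s14 hj'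
  have hne : (i, j') ≠ (i', j) := by
    rintro ⟨⟩
    exact hij hj'
  obtain ⟨b, rfl⟩ : ∃ b, a = b + Finsupp.single (i', j) 1 :=
    Finsupp.exists_eq_add_single_one_s14 (by simpa [Finsupp.single_apply, hne] using hi')
  refine ⟨b + Finsupp.single (i, j) 1 + Finsupp.single (i', j') 1, by simp, ?_, ?_⟩
  · rw [add_right_comm b, marginals_exchange]
  · rw [add_right_comm b]
    exact monomial_exchange_sub_mem_minorIdeal b i i' j j'

theorem monomial_sub_monomial_mem_minorIdeal {m m' : ι × κ →₀ ℕ}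
    (h : marginals m = marginals m') : monomial m (1 : R) - monomial m' 1 ∈ minorIdeal ι κ R := by
  induction m using WellFoundedLT.induction generalizing m' with
  | _ m ih =>
  rcases eq_or_ne m 0 with rfl | hm
  · rw [eq_zero_of_marginals_eq_zero (h.symm.trans marginals_zero), sub_self]
    exact zero_mem _
  obtain ⟨⟨i, j⟩, hij⟩ := Finsupp.ne_iff.1 hm
  have hi : marginals m' (Sum.inl i) ≠ 0 := h ▸ (hij.bot_lt.trans_le (le_marginals_inl m i j)).ne'
  have hj : marginals m' (Sum.inr j) ≠ 0 := h ▸ (hij.bot_lt.trans_le (le_marginals_inr m i j)).ne'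
  -- Move `m'` to an `m''` sharing the entry `(i, j)` with `m`, then cancel `X (i, j)`.
  obtain ⟨m'', hm'', hmarg, hm'm''⟩ := exists_exchange_ne_zero (R := R) m' hi hj
  obtain ⟨a, rfl⟩ := Finsupp.exists_eq_add_single_one_s14 hij
  obtain ⟨b, rfl⟩ := Finsupp.exists_eq_add_single_one_s14 hm''
  have hab : marginals a = marginals b := by
    refine add_right_cancel (b := marginals (Finsupp.single (i, j) 1)) ?_
    rw [← marginals_add, ← marginals_add, h, hmarg]
  have hlt : a < a + Finsupp.single (i, j) 1 := lt_add_of_pos_right a (by simp [pos_iff_ne_zero])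
  have hstep : monomial (a + Finsupp.single (i, j) 1) (1 : R) -
      monomial (b + Finsupp.single (i, j) 1) 1 ∈ minorIdeal ι κ R := by
    simpa only [monomial_add_single, pow_one, ← sub_mul] using
      Ideal.mul_mem_right (X (i, j)) _ (ih a hlt hab)
  simpa using add_mem hstep (neg_mem hm'm'')

variable (R) in
/-- A linear section of `segre` over its image. -/
noncomputable def segreSection : MvPolynomial (ι ⊕ κ) R →ₗ[R] MvPolynomial (ι × κ) R :=
  (basisMonomials (ι ⊕ κ) R).constr R fun n => monomial (Function.invFun marginals n) 1

theorem segreSection_monomial (n : ι ⊕ κ →₀ ℕ) (c : R) :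
    segreSection R (monomial n c) = monomial (Function.invFun marginals n) c := by
  have h : monomial n c = c • basisMonomials (ι ⊕ κ) R n := by
    simp [coe_basisMonomials, smul_monomial]
  rw [h, map_smul, segreSection, Module.Basis.constr_basis, smul_monomial, smul_eq_mul, mul_one]

theorem sub_segreSection_segre_mem_minorIdeal (f : MvPolynomial (ι × κ) R) :
    f - segreSection R (segre R f) ∈ minorIdeal ι κ R := by
  induction f using MvPolynomial.induction_on' with
  | monomial m c =>
    rw [segre_monomial, segreSection_monomial]
    have h := monomial_sub_monomial_mem_minorIdeal (R := R)
      (Function.invFun_eq (f := marginals) ⟨m, rfl⟩).symm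
    simpa [smul_monomial, smul_sub] using Submodule.smul_of_tower_mem _ c h
  | add p q hp hq =>
    rw [map_add, map_add, add_sub_add_comm]
    exact add_mem hp hq

theorem ker_segre : RingHom.ker (segre R : MvPolynomial (ι × κ) R →ₐ[R] _) = minorIdeal ι κ R :=
  le_antisymm
    (fun f hf => by simpa [RingHom.mem_ker.1 hf] using sub_segreSection_segre_mem_minorIdeal f)
    minorIdeal_le_ker_segre

theorem minorIdeal_isPrime [IsDomain R] : (minorIdeal ι κ R).IsPrime :=
  ker_segre (ι := ι) (κ := κ) (R := R) ▸ RingHom.ker_isPrime _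

end Segre
end MvPolynomial

def matrixEntryEquiv (r : ℕ) : Fin 3 × Fin r ≃ Fin r ⊕ (Fin r ⊕ Fin r) where
  toFun p := ![Sum.inl, Sum.inr ∘ Sum.inl, Sum.inr ∘ Sum.inr] p.1 p.2
  invFun := Sum.elim (fun ℓ => (0, ℓ)) (Sum.elim (fun ℓ => (1, ℓ)) (fun ℓ => (2, ℓ)))
  left_inv := by
    rintro ⟨ρ, ℓ⟩
    fin_cases ρ <;> rfl
  right_inv := by
    rintro (ℓ | ℓ | ℓ) <;> rfl

section

variable (k : Type*) [CommRing k] (r : ℕ)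

theorem P2ideal_eq_map_minorIdeal :
    P2ideal k r = (minorIdeal (Fin 3) (Fin r) k).map (rename (matrixEntryEquiv r)) := by
  refine le_antisymm (Ideal.span_le.2 ?_) (Ideal.map_le_iff_le_comap.2 (minorIdeal_le ?_))
  · rintro _ ⟨ℓ, ℓ', -, rfl | rfl | rfl⟩
    · simpa [minor, matrixEntryEquiv] using
        Ideal.mem_map_of_mem (rename (matrixEntryEquiv r)) (minor_mem_minorIdeal (R := k) 0 1 ℓ ℓ')
    · simpa [minor, matrixEntryEquiv] using
        Ideal.mem_map_of_mem (rename (matrixEntryEquiv r)) (minor_mem_minorIdeal (R := k) 1 2 ℓ ℓ')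
    · simpa [minor, matrixEntryEquiv] using
        Ideal.mem_map_of_mem (rename (matrixEntryEquiv r)) (minor_mem_minorIdeal (R := k) 0 2 ℓ ℓ')
  · intro ρ ρ' ℓ ℓ' hρ hℓ
    fin_cases ρ <;> fin_cases ρ' <;> simp at hρ <;>
      exact Ideal.subset_span ⟨ℓ, ℓ', hℓ, by simp [minor, matrixEntryEquiv]⟩

theorem isPrime_P2ideal [IsDomain k] : (P2ideal k r).IsPrime := by
  have := minorIdeal_isPrime (ι := Fin 3) (κ := Fin r) (R := k)
  rw [P2ideal_eq_map_minorIdeal]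
  exact Ideal.map_isPrime_of_equiv (renameEquiv k (matrixEntryEquiv r))

theorem isPrime_P1ideal [IsDomain k] : (P1ideal k r).IsPrime := by
  rw [P1ideal, show Set.range (fun ℓ : Fin r => X (Sum.inr (Sum.inl ℓ))) =
    X '' Set.range (Sum.inr ∘ Sum.inl) from Set.range_comp X _]
  exact isPrime_span_X_image _

variable {k r}

theorem Iideal_le_P1ideal : Iideal k r ≤ P1ideal k r := by
  have hy (ℓ : Fin r) : X (Sum.inr (Sum.inl ℓ)) ∈ P1ideal k r := Ideal.subset_span ⟨ℓ, rfl⟩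
  refine Ideal.span_le.2 ?_
  rintro _ ⟨ℓ, ℓ', -, rfl | rfl⟩
  · exact sub_mem (Ideal.mul_mem_left _ _ (hy ℓ')) (Ideal.mul_mem_left _ _ (hy ℓ))
  · exact sub_mem (Ideal.mul_mem_right _ _ (hy ℓ)) (Ideal.mul_mem_right _ _ (hy ℓ'))

theorem Iideal_le_P2ideal : Iideal k r ≤ P2ideal k r := by
  refine Ideal.span_mono ?_
  rintro _ ⟨ℓ, ℓ', h, hf | hf⟩
  · exact ⟨ℓ, ℓ', h, Or.inl hf⟩
  · exact ⟨ℓ, ℓ', h, Or.inr (Or.inl hf)⟩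

theorem xy_minor_mem_Iideal (a b : Fin r) :
    X (Sum.inl a) * X (Sum.inr (Sum.inl b)) - X (Sum.inl b) * X (Sum.inr (Sum.inl a)) ∈
      Iideal k r :=
  Ideal.mem_of_antisymm_of_forall_lt (I := Iideal k r)
    (g := fun a b =>
      X (Sum.inl a) * X (Sum.inr (Sum.inl b)) - X (Sum.inl b) * X (Sum.inr (Sum.inl a)))
    (fun _ _ => by ring) (fun _ => sub_self _)
    (fun a b h => Ideal.subset_span ⟨a, b, h, Or.inl rfl⟩) a b

theorem yz_minor_mem_Iideal (a b : Fin r) :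
    X (Sum.inr (Sum.inl a)) * X (Sum.inr (Sum.inr b)) -
      X (Sum.inr (Sum.inl b)) * X (Sum.inr (Sum.inr a)) ∈ Iideal k r :=
  Ideal.mem_of_antisymm_of_forall_lt (I := Iideal k r)
    (g := fun a b => X (Sum.inr (Sum.inl a)) * X (Sum.inr (Sum.inr b)) -
      X (Sum.inr (Sum.inl b)) * X (Sum.inr (Sum.inr a)))
    (fun _ _ => by ring) (fun _ => sub_self _)
    (fun a b h => Ideal.subset_span ⟨a, b, h, Or.inr rfl⟩) a b

theorem P1ideal_mul_P2ideal_le_Iideal : P1ideal k r * P2ideal k r ≤ Iideal k r := by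
  rw [P1ideal, P2ideal, Ideal.span_mul_span', Ideal.span_le]
  rintro _ ⟨_, ⟨m, rfl⟩, _, ⟨ℓ, ℓ', h, rfl | rfl | rfl⟩, rfl⟩
  · exact Ideal.mul_mem_left _ _ (Ideal.subset_span ⟨ℓ, ℓ', h, Or.inl rfl⟩)
  · exact Ideal.mul_mem_left _ _ (Ideal.subset_span ⟨ℓ, ℓ', h, Or.inr rfl⟩)
  · -- `y_m (x_ℓ z_ℓ' - x_ℓ' z_ℓ) = z_ℓ' (x_ℓ y_m - x_m y_ℓ) + x_m (y_ℓ z_ℓ' - y_ℓ' z_ℓ)`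
    --   `+ z_ℓ (x_m y_ℓ' - x_ℓ' y_m)`
    have hmem := add_mem (add_mem
      (Ideal.mul_mem_left _ (X (Sum.inr (Sum.inr ℓ'))) (xy_minor_mem_Iideal (k := k) ℓ m))
      (Ideal.mul_mem_left _ (X (Sum.inl m)) (yz_minor_mem_Iideal ℓ ℓ')))
      (Ideal.mul_mem_left _ (X (Sum.inr (Sum.inr ℓ))) (xy_minor_mem_Iideal m ℓ'))
    rw [SetLike.mem_coe]
    convert hmem using 1
    ring

variable [Nontrivial k]

theorem not_P1ideal_le_P2ideal (hr : 0 < r) : ¬P1ideal k r ≤ P2ideal k r := by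
  intro hle
  have hker : P2ideal k r ≤ RingHom.ker (eval fun _ => (1 : k)) := by
    refine Ideal.span_le.2 ?_
    rintro _ ⟨ℓ, ℓ', -, rfl | rfl | rfl⟩ <;> simp
  have hy : X (Sum.inr (Sum.inl ⟨0, hr⟩)) ∈ P1ideal k r := Ideal.subset_span ⟨_, rfl⟩
  simpa using hker (hle hy)

theorem not_P2ideal_le_P1ideal (hr : 1 < r) : ¬P2ideal k r ≤ P1ideal k r := by
  intro hle
  let ℓ₀ : Fin r := ⟨0, by omega⟩
  let ℓ₁ : Fin r := ⟨1, hr⟩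
  have h₀₁ : ℓ₀ < ℓ₁ := Fin.mk_lt_mk.2 zero_lt_one
  let v : Fin r ⊕ (Fin r ⊕ Fin r) → k :=
    Sum.elim (fun ℓ => if ℓ = ℓ₀ then 1 else 0) (Sum.elim 0 fun ℓ => if ℓ = ℓ₁ then 1 else 0)
  have hker : P1ideal k r ≤ RingHom.ker (eval v) := by
    refine Ideal.span_le.2 ?_
    rintro _ ⟨ℓ, rfl⟩
    simp [v]
  have hxz : X (Sum.inl ℓ₀) * X (Sum.inr (Sum.inr ℓ₁)) -
      X (Sum.inl ℓ₁) * X (Sum.inr (Sum.inr ℓ₀)) ∈ P2ideal k r :=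
    Ideal.subset_span ⟨ℓ₀, ℓ₁, h₀₁, Or.inr (Or.inr rfl)⟩
  simpa [v, h₀₁.ne, h₀₁.ne'] using hker (hle hxz)

end

theorem stmt_14_general (k : Type*) [Field k] (r : ℕ) (hr : 2 ≤ r) :
    (Iideal k r).radical = P1ideal k r ⊓ P2ideal k r ∧
    (P1ideal k r).IsPrime ∧
    ¬ (P1ideal k r ≤ P2ideal k r) ∧
    ¬ (P2ideal k r ≤ P1ideal k r) ∧
    ¬ ((Iideal k r).radical).IsPrime := by
  have hP1 := isPrime_P1ideal k r
  have h12 : ¬P1ideal k r ≤ P2ideal k r := not_P1ideal_le_P2ideal (by omega)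
  have h21 : ¬P2ideal k r ≤ P1ideal k r := not_P2ideal_le_P1ideal hr
  have hrad : (Iideal k r).radical = P1ideal k r ⊓ P2ideal k r :=
    Ideal.radical_eq_inf_of_le_of_mul_le hP1 (isPrime_P2ideal k r)
      (le_inf Iideal_le_P1ideal Iideal_le_P2ideal) P1ideal_mul_P2ideal_le_Iideal
  exact ⟨hrad, hP1, h12, h21, hrad ▸ Ideal.not_isPrime_inf_of_not_le h12 h21⟩

/-- For `r ≥ 2`: the radical of `I_r` equals `P_1 ∩ P_2`, `P_1` is prime, neither of
`P_1 ⊆ P_2` and `P_2 ⊆ P_1` holds, and consequently the radical of `I_r` is not prime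
(the variety `Y_r(U_4/Γ_3)` is the non-trivial union of two irreducible closed
subvarieties). -/
theorem stmt_14 (k : Type*) [Field k] [IsAlgClosed k] (p : ℕ) (hp : p.Prime)
    (hp2 : 2 < p) [CharP k p] (r : ℕ) (hr : 2 ≤ r) :
    (Iideal k r).radical = P1ideal k r ⊓ P2ideal k r ∧
    (P1ideal k r).IsPrime ∧
    ¬ (P1ideal k r ≤ P2ideal k r) ∧
    ¬ (P2ideal k r ≤ P1ideal k r) ∧
    ¬ ((Iideal k r).radical).IsPrime :=
  stmt_14_general k r hr
end

section
/- Assume r ≥ 2. The Krull dimension of the ring C_r/I_r equals 2r. -/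
open MvPolynomial

/-!
The quotient `C_r/I_r` surjects onto `C_r/(y_0, …, y_{r-1})`, a polynomial ring in the `2r`
variables `x_ℓ, z_ℓ`; this gives `2r ≤ dim`.

Conversely, a chain of primes of length `n` starting at `q` yields `n` algebraically independent
elements of the domain `C_r/q`, so it suffices to bound the transcendence degree of every domain
`A` that is a quotient of `C_r/I_r`. If all `y_ℓ` vanish in `A`, then `A` is generated by the `2r`
images of the `x_ℓ, z_ℓ`. Otherwise some `y_j ≠ 0` in `A`, and the relations
`y_j x_ℓ = x_j y_ℓ`, `y_j z_ℓ = z_j y_ℓ` make `A` algebraic over the subalgebra generated by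
`y_0, …, y_{r-1}, x_j, z_j`, so its transcendence degree is at most `r + 2 ≤ 2r`.
-/

open Algebra Set

section Transcendence

variable {k : Type*} [CommRing k]

/-- A nonzero algebraic element of `ker φ` would put a nonzero element of `adjoin k (range t)`
into `ker φ`, but `φ` is injective on that subalgebra. -/
theorem transcendental_adjoin_of_map_eq_zero {ι A C : Type*} [CommRing A] [IsDomain A]
    [Algebra k A] [CommRing C] [Algebra k C] (φ : A →ₐ[k] C) {t : ι → A}
    (ht : AlgebraicIndependent k (φ ∘ t)) {f : A} (hf0 : f ≠ 0) (hf : φ f = 0) :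
    Transcendental (adjoin k (range t)) f := by
  intro halg
  obtain ⟨⟨a, ha⟩, hker, ha0⟩ := Submodule.exists_mem_ne_zero_of_ne_bot
    (Ideal.comap_ne_bot_of_algebraic_mem (I := RingHom.ker φ) hf0 hf halg)
  rw [adjoin_range_eq_range_aeval] at ha
  obtain ⟨P, rfl⟩ := ha
  have hP : aeval (φ ∘ t) P = 0 := (comp_aeval_apply (f := t) φ P).symm.trans hker
  simp only [ht.eq_zero_of_aeval_eq_zero P hP, map_zero] at ha0
  exact ha0 rfl

variable {B : Type*} [CommRing B] [Algebra k B]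

theorem exists_algebraicIndependent_option_of_lt {ι : Type*} {p q : Ideal B} [p.IsPrime]
    (hpq : p < q) {t : ι → B} (ht : AlgebraicIndependent k (Ideal.Quotient.mk q ∘ t)) :
    ∃ f : B, AlgebraicIndependent k (Ideal.Quotient.mk p ∘ fun o : Option ι => o.elim f t) := by
  obtain ⟨f, hfq, hfp⟩ := SetLike.exists_of_lt hpq
  let φ := Ideal.Quotient.factorₐ k hpq.le
  have ht' : AlgebraicIndependent k (φ ∘ Ideal.Quotient.mk p ∘ t) := ht
  refine ⟨f, ?_⟩
  have hfamily : (Ideal.Quotient.mk p ∘ fun o : Option ι => o.elim f t) =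
      fun o => o.elim (Ideal.Quotient.mk p f) (Ideal.Quotient.mk p ∘ t) := by
    funext o; cases o <;> rfl
  rw [hfamily, (ht'.of_comp φ).option_iff_transcendental]
  exact transcendental_adjoin_of_map_eq_zero φ ht'
    (fun h => hfp (Ideal.Quotient.eq_zero_iff_mem.mp h)) (Ideal.Quotient.eq_zero_iff_mem.mpr hfq)

end Transcendence

section KrullDimension

variable {k B : Type*} [Field k] [CommRing B] [Algebra k B]

theorem exists_algebraicIndependent_of_ltSeries (σ : LTSeries (PrimeSpectrum B)) :
    ∃ v : Fin σ.length → B, AlgebraicIndependent k (Ideal.Quotient.mk σ.head.asIdeal ∘ v) := by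
  induction σ using RelSeries.inductionOn with
  | singleton q =>
    rw [RelSeries.singleton_length]
    exact ⟨Fin.elim0, algebraicIndependent_empty_type⟩
  | cons σ q hq ih =>
    obtain ⟨v, hv⟩ := ih
    obtain ⟨f, hf⟩ := exists_algebraicIndependent_option_of_lt (k := k) hq hv
    rw [RelSeries.cons_length, RelSeries.head_cons]
    refine ⟨Fin.cons f v, ?_⟩
    convert hf.comp (finSuccEquiv σ.length) (Equiv.injective _) using 1
    funext i
    induction i using Fin.cases <;> simp

theorem ringKrullDim_le_of_forall_trdeg_le {n : ℕ}
    (h : ∀ q : Ideal B, q.IsPrime → trdeg k (B ⧸ q) ≤ n) : ringKrullDim B ≤ n := by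
  refine iSup_le fun σ => ?_
  obtain ⟨v, hv⟩ := exists_algebraicIndependent_of_ltSeries (k := k) σ
  have hcard := hv.lift_cardinalMk_le_trdeg.trans (Cardinal.lift_le.mpr (h _ σ.head.isPrime))
  simp only [Cardinal.mk_fintype, Fintype.card_fin, Cardinal.lift_natCast, Nat.cast_le] at hcard
  exact_mod_cast hcard

end KrullDimension

section Algebraic

variable {k A : Type*} [CommRing k] [CommRing A] [IsDomain A] [Algebra k A]

theorem isAlgebraic_adjoin_of_mem {s : Set A} {a : A} (ha : a ∈ adjoin k s) :
    IsAlgebraic (adjoin k s) a :=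
  isAlgebraic_algebraMap (⟨a, ha⟩ : adjoin k s)

theorem trdeg_le_card_of_isAlgebraic {σ ι : Type*} [Fintype ι]
    (π : MvPolynomial σ k →ₐ[k] A) (hπ : Function.Surjective π) (w : ι → A)
    (halg : ∀ i, IsAlgebraic (adjoin k (range w)) (π (X i))) :
    trdeg k A ≤ Fintype.card ι := by
  have : Algebra.IsAlgebraic (adjoin k (range w)) A := by
    refine ⟨fun a => ?_⟩
    obtain ⟨P, rfl⟩ := hπ a
    have hrange : π.range ≤
        (Subalgebra.algebraicClosure (adjoin k (range w)) A).restrictScalars k := by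
      rw [aeval_unique π, aeval_range, adjoin_le_iff]
      rintro _ ⟨i, rfl⟩
      exact halg i
    exact hrange ⟨P, rfl⟩
  calc trdeg k A ≤ Cardinal.mk (range w) := IsAlgebraic.trdeg_le_cardinalMk k (range w)
    _ ≤ Fintype.card ι := by simpa using Cardinal.mk_range_le_lift (f := w)

end Algebraic

theorem apply_swap_of_forall_lt {α β : Type*} [LinearOrder α] {f : α → α → β}
    (h : ∀ i j, i < j → f i j = f j i) (i j : α) : f i j = f j i := by
  rcases lt_trichotomy i j with hij | rfl | hij
  · exact h i j hij
  · rfl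
  · exact (h j i hij).symm

section Components

variable {k A : Type*} [Field k] [CommRing A] [Algebra k A] {r : ℕ}
  {π : MvPolynomial (Fin r ⊕ (Fin r ⊕ Fin r)) k →ₐ[k] A}

theorem map_x_mul_map_y_swap (hI : Iideal k r ≤ RingHom.ker π) (ℓ ℓ' : Fin r) :
    π (X (.inl ℓ)) * π (X (.inr (.inl ℓ'))) = π (X (.inl ℓ')) * π (X (.inr (.inl ℓ))) :=
  apply_swap_of_forall_lt (f := fun ℓ ℓ' => π (X (.inl ℓ)) * π (X (.inr (.inl ℓ'))))
    (fun ℓ ℓ' h => by simpa [sub_eq_zero] using hI (Ideal.subset_span ⟨ℓ, ℓ', h, .inl rfl⟩))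
    ℓ ℓ'

theorem map_y_mul_map_z_swap (hI : Iideal k r ≤ RingHom.ker π) (ℓ ℓ' : Fin r) :
    π (X (.inr (.inl ℓ))) * π (X (.inr (.inr ℓ'))) =
      π (X (.inr (.inl ℓ'))) * π (X (.inr (.inr ℓ))) :=
  apply_swap_of_forall_lt (f := fun ℓ ℓ' => π (X (.inr (.inl ℓ))) * π (X (.inr (.inr ℓ'))))
    (fun ℓ ℓ' h => by simpa [sub_eq_zero] using hI (Ideal.subset_span ⟨ℓ, ℓ', h, .inr rfl⟩))
    ℓ ℓ'

variable [IsDomain A]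

theorem trdeg_le_of_forall_map_y_eq_zero (hπ : Function.Surjective π)
    (hy : ∀ ℓ, π (X (.inr (.inl ℓ))) = 0) : trdeg k A ≤ (2 * r : ℕ) := by
  let w : Fin r ⊕ Fin r → A :=
    Sum.elim (fun ℓ => π (X (.inl ℓ))) (fun ℓ => π (X (.inr (.inr ℓ))))
  have hw : ∀ i, w i ∈ adjoin k (range w) := fun i => subset_adjoin (mem_range_self i)
  convert trdeg_le_card_of_isAlgebraic π hπ w ?_ using 2
  · simp [two_mul]
  rintro (ℓ | ℓ | ℓ)
  · exact isAlgebraic_adjoin_of_mem (hw (.inl ℓ))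
  · rw [hy ℓ]; exact isAlgebraic_zero
  · exact isAlgebraic_adjoin_of_mem (hw (.inr ℓ))

theorem trdeg_le_of_map_y_ne_zero (hπ : Function.Surjective π) (hI : Iideal k r ≤ RingHom.ker π)
    {j : Fin r} (hj : π (X (.inr (.inl j))) ≠ 0) : trdeg k A ≤ (r + 2 : ℕ) := by
  let w : Fin r ⊕ Fin 2 → A :=
    Sum.elim (fun ℓ => π (X (.inr (.inl ℓ)))) ![π (X (.inl j)), π (X (.inr (.inr j)))]
  have hw : ∀ i, w i ∈ adjoin k (range w) := fun i => subset_adjoin (mem_range_self i)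
  have hy : ∀ ℓ, π (X (.inr (.inl ℓ))) ∈ adjoin k (range w) := fun ℓ => hw (.inl ℓ)
  have hx : π (X (.inl j)) ∈ adjoin k (range w) := hw (.inr 0)
  have hz : π (X (.inr (.inr j))) ∈ adjoin k (range w) := hw (.inr 1)
  have hyj : π (X (.inr (.inl j))) ∈ nonZeroDivisors A := mem_nonZeroDivisors_of_ne_zero hj
  convert trdeg_le_card_of_isAlgebraic π hπ w ?_ using 2
  · simp
  rintro (ℓ | ℓ | ℓ)
  · refine .of_mul hyj (isAlgebraic_adjoin_of_mem (hy j)) (isAlgebraic_adjoin_of_mem ?_)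
    rw [mul_comm, map_x_mul_map_y_swap hI ℓ j]
    exact mul_mem hx (hy ℓ)
  · exact isAlgebraic_adjoin_of_mem (hy ℓ)
  · refine .of_mul hyj (isAlgebraic_adjoin_of_mem (hy j)) (isAlgebraic_adjoin_of_mem ?_)
    rw [map_y_mul_map_z_swap hI j ℓ]
    exact mul_mem (hy ℓ) hz

theorem trdeg_le_of_Iideal_le_ker (hr : 2 ≤ r) (hπ : Function.Surjective π)
    (hI : Iideal k r ≤ RingHom.ker π) : trdeg k A ≤ (2 * r : ℕ) := by
  by_cases hy : ∀ ℓ, π (X (.inr (.inl ℓ))) = 0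
  · exact trdeg_le_of_forall_map_y_eq_zero hπ hy
  · obtain ⟨j, hj⟩ := not_forall.mp hy
    exact (trdeg_le_of_map_y_ne_zero hπ hI hj).trans (by exact_mod_cast (by omega : r + 2 ≤ 2 * r))

end Components

section Dimension

variable {k : Type*} [Field k] {r : ℕ}

theorem ringKrullDim_quotient_Iideal_le (hr : 2 ≤ r) :
    ringKrullDim (MvPolynomial (Fin r ⊕ (Fin r ⊕ Fin r)) k ⧸ Iideal k r) ≤ (2 * r : ℕ) := by
  refine ringKrullDim_le_of_forall_trdeg_le (k := k) fun q _ => ?_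
  refine trdeg_le_of_Iideal_le_ker hr
    (π := (Ideal.Quotient.mkₐ k q).comp (Ideal.Quotient.mkₐ k (Iideal k r)))
    ((Ideal.Quotient.mkₐ_surjective k q).comp (Ideal.Quotient.mkₐ_surjective k _)) ?_
  intro f hf
  simp [Ideal.Quotient.eq_zero_iff_mem.mpr hf]

theorem le_ringKrullDim_quotient_Iideal :
    ((2 * r : ℕ) : WithBot ℕ∞) ≤
      ringKrullDim (MvPolynomial (Fin r ⊕ (Fin r ⊕ Fin r)) k ⧸ Iideal k r) := by
  let ψ : MvPolynomial (Fin r ⊕ (Fin r ⊕ Fin r)) k →ₐ[k] MvPolynomial (Fin r ⊕ Fin r) k :=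
    aeval (Sum.elim (fun ℓ => X (.inl ℓ)) (Sum.elim 0 fun ℓ => X (.inr ℓ)))
  have hsection : ψ.comp (rename (Sum.map id Sum.inr)) = AlgHom.id k _ := by
    ext (ℓ | ℓ) <;> simp [ψ]
  have hψ : Function.Surjective ψ := fun P =>
    ⟨rename (Sum.map id Sum.inr) P, DFunLike.congr_fun hsection P⟩
  have hI : Iideal k r ≤ RingHom.ker ψ := by
    rw [Iideal, Ideal.span_le]
    rintro _ ⟨ℓ, ℓ', -, rfl | rfl⟩ <;> simp [ψ]
  have hdim : ringKrullDim (MvPolynomial (Fin r ⊕ Fin r) k) = (2 * r : ℕ) := by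
    rw [MvPolynomial.ringKrullDim_of_isNoetherianRing, ringKrullDim_eq_zero_of_field]
    simp [two_mul]
  rw [← hdim]
  exact ringKrullDim_le_of_surjective _ (Ideal.Quotient.lift_surjective_of_surjective _ hI hψ)

end Dimension

theorem stmt_17_general (k : Type*) [Field k] (r : ℕ) (hr : 2 ≤ r) :
    ringKrullDim (MvPolynomial (Fin r ⊕ (Fin r ⊕ Fin r)) k ⧸ Iideal k r) = (2 * r : ℕ) :=
  le_antisymm (ringKrullDim_quotient_Iideal_le hr) le_ringKrullDim_quotient_Iideal

/-- For `r ≥ 2`, the Krull dimension of `C_r/I_r` equals `2r`. -/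
theorem stmt_17 (k : Type*) [Field k] [IsAlgClosed k] (p : ℕ) (hp : p.Prime)
    (hp2 : 2 < p) [CharP k p] (r : ℕ) (hr : 2 ≤ r) :
    ringKrullDim (MvPolynomial (Fin r ⊕ (Fin r ⊕ Fin r)) k ⧸ Iideal k r) = (2 * r : ℕ) :=
  stmt_17_general k r hr
end

section
/- Fix r ≥ 1. The intersection over all s ≥ 1 of the images σ_{r,s}(M_{r+s}) ⊆ A_r equals {0}. (Equivalently, for every nonzero polynomial f ∈ A_r with zero constant term there exists s ≥ 1 such that f does not lie in the image of the composite σ_{r,s} restricted to the ideal M_{r+s}; indeed any nonzero element of σ_{r,s}(M_{r+s}) has degree at least p^s.) -/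
open MvPolynomial

/-- The map `π_s : A_{s+1} = k[T_0,…,T_s] → A_s = k[T_0,…,T_{s-1}]` with
`π_s(T_ℓ) = T_ℓ^p` for `0 ≤ ℓ < s` and `π_s(T_s) = 0` (the map `(−)^{[p]}` of the paper). -/
noncomputable def piMap (k : Type*) [CommRing k] (p s : ℕ) :
    MvPolynomial (Fin (s + 1)) k →ₐ[k] MvPolynomial (Fin s) k :=
  aeval fun ℓ : Fin (s + 1) =>
    if h : (ℓ : ℕ) < s then (X (⟨ℓ, h⟩ : Fin s) : MvPolynomial (Fin s) k) ^ p else 0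

/-- The composite `σ_{r,s} = π_r ∘ π_{r+1} ∘ ⋯ ∘ π_{r+s-1} : A_{r+s} → A_r`
(with `σ_{r,0} = id`). -/
noncomputable def sigmaMap (k : Type*) [CommRing k] (p r : ℕ) :
    (s : ℕ) → (MvPolynomial (Fin (r + s)) k →ₐ[k] MvPolynomial (Fin r) k)
  | 0 => AlgHom.id k _
  | s + 1 => (sigmaMap k p r s).comp (piMap k p (r + s))

/-- `M_t ⊆ A_t` is the ideal generated by the variables `T_0,…,T_{t-1}`. -/
noncomputable def Mideal (k : Type*) [CommRing k] (t : ℕ) :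
    Ideal (MvPolynomial (Fin t) k) :=
  Ideal.span (Set.range (X : Fin t → MvPolynomial (Fin t) k))

/-!
`σ_{r,s}` sends every variable either to `0` or to the `p^s`-th power of a variable, so every
nonzero element of `σ_{r,s}(M_{r+s})` has total degree at least `p^s`. A fixed nonzero `f` is
therefore excluded as soon as `p^s` exceeds its total degree.
-/

lemma sigmaMap_X {k : Type*} [CommRing k] {p : ℕ} (hp : p ≠ 0) (r s : ℕ) (i : Fin (r + s)) :
    sigmaMap k p r s (X i) =
      if h : (i : ℕ) < r then (X (⟨i, h⟩ : Fin r) : MvPolynomial (Fin r) k) ^ p ^ s else 0 := by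
  induction s with
  | zero => simp [sigmaMap]
  | succ s ih =>
    change sigmaMap k p r s (piMap k p (r + s) (X i)) = _
    rw [piMap, aeval_X]
    by_cases his : (i : ℕ) < r + s
    · rw [dif_pos his, map_pow, ih ⟨i, his⟩]
      by_cases hir : (i : ℕ) < r
      · rw [dif_pos hir, dif_pos hir, ← pow_mul, ← pow_succ]
      · rw [dif_neg hir, dif_neg hir, zero_pow hp]
    · have hir : ¬ (i : ℕ) < r := fun h => his (h.trans_le (Nat.le_add_right r s))
      rw [dif_neg his, map_zero, dif_neg hir]

lemma map_sigmaMap_Mideal_le {k : Type*} [CommRing k] {p : ℕ} (hp : p ≠ 0) (r s : ℕ) :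
    (Mideal k (r + s)).map (sigmaMap k p r s) ≤
      Ideal.span (Set.range fun j : Fin r => (X j : MvPolynomial (Fin r) k) ^ p ^ s) := by
  rw [Mideal, Ideal.map_span, Ideal.span_le]
  rintro _ ⟨_, ⟨i, rfl⟩, rfl⟩
  rw [SetLike.mem_coe, sigmaMap_X hp]
  split_ifs with hir
  · exact Ideal.subset_span ⟨_, rfl⟩
  · exact Ideal.zero_mem _

lemma MvPolynomial.le_totalDegree_of_mem_span_X_pow {σ R : Type*} [CommSemiring R]
    {n : ℕ} {f : MvPolynomial σ R} (hf : f ∈ Ideal.span (Set.range fun j => X j ^ n))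
    (hf0 : f ≠ 0) : n ≤ f.totalDegree := by
  simp only [X_pow_eq_monomial] at hf
  rw [Set.range_comp' (fun m => monomial m (1 : R)), mem_ideal_span_monomial_image] at hf
  obtain ⟨m, hm⟩ := support_nonempty.mpr hf0
  obtain ⟨_, ⟨j, rfl⟩, hjm⟩ := hf m hm
  calc n ≤ m j := Finsupp.single_le_iff.mp hjm
    _ ≤ m.degree := Finsupp.le_degree j m
    _ ≤ f.totalDegree := le_totalDegree hm

theorem stmt_18_general (k : Type*) [Field k] (p : ℕ) (hp : p.Prime) (r : ℕ) :
    (⋂ s : ℕ, ⋂ _ : 1 ≤ s,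
      (sigmaMap k p r s) '' ((Mideal k (r + s) : Ideal (MvPolynomial (Fin (r + s)) k)) :
        Set (MvPolynomial (Fin (r + s)) k))) = {0} := by
  refine Set.eq_singleton_iff_unique_mem.mpr ⟨?_, fun f hf => ?_⟩
  · simp only [Set.mem_iInter]
    exact fun s _ => ⟨0, Submodule.zero_mem _, map_zero _⟩
  by_contra hf0
  set s := f.totalDegree + 1
  obtain ⟨g, hg, hgf⟩ := Set.mem_iInter₂.mp hf s (Nat.le_add_left 1 _)
  have hfM : f ∈ Ideal.span (Set.range fun j : Fin r => (X j : MvPolynomial (Fin r) k) ^ p ^ s) :=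
    hgf ▸ map_sigmaMap_Mideal_le hp.ne_zero r s (Ideal.mem_map_of_mem _ hg)
  have hdeg : p ^ s ≤ f.totalDegree := le_totalDegree_of_mem_span_X_pow hfM hf0
  have hs : s < p ^ s := Nat.lt_pow_self hp.one_lt
  omega

/-- For fixed `r ≥ 1`, the intersection over all `s ≥ 1` of the images
`σ_{r,s}(M_{r+s}) ⊆ A_r` equals `{0}`. -/
theorem stmt_18 (k : Type*) [Field k] (p : ℕ) (hp : p.Prime)
    (hp2 : 2 < p) [CharP k p] (r : ℕ) (hr : 1 ≤ r) :
    (⋂ s : ℕ, ⋂ _ : 1 ≤ s,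
      (sigmaMap k p r s) '' ((Mideal k (r + s) : Ideal (MvPolynomial (Fin (r + s)) k)) :
        Set (MvPolynomial (Fin (r + s)) k))) = {0} :=
  stmt_18_general k p hp r
end
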